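/- For every integer r ≥ 1, the homomorphism from the free group F(d₁,d₂) to G_cd sending d₁, d₂ to the generators d₁, d₂ of G_cd is injective. In other words, F(d₁,d₂) is a subgroup of G_cd. -/

import Mathlib

/-!
With `s = r(2i+1)`, the substitution `dⱼ ↦ D_{ij}` sends `d₁, d₂` to
`u = (d₁d₂^(s+1))⋯(d₁d₂^(s+r))` and `v = (d₁d₂^(s+r+1))⋯(d₁d₂^(s+2r))`, and it is
injective: for `r = 1`, `u, v` is a Nielsen transform of `d₁, d₂`; for `r ≥ 2`, left
multiplication by `u` and `v` plays ping-pong on reduced words, `u` producing words that begin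
with `d₁d₂^(s+1)d₁` and `v` words that begin with `d₁d₂^(s+r+1)`. Injective endomorphisms are
realised by conjugation in an iterated HNN extension containing `F(d₁, d₂)`; sending `cᵢ` to
the inverse of the `i`-th stable letter kills the relators of `G_cd`, and the composite
`F(d₁, d₂) → G_cd → HNN` is that embedding.
-/

/-- The "progression word" `x y^(s+1) x y^(s+2) ⋯ x y^(s+r)` in a group. -/
def wordProg {G : Type*} [Group G] (x y : G) (s r : ℕ) : G :=
  ((List.range r).map (fun k => x * y ^ (s + k + 1))).prod

/-- Generators of `G_cd`: `0 = c₁`, `1 = c₂`, `2 = d₁`, `3 = d₂`.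
The relators are `cᵢ⁻¹ d_j cᵢ D_{ij}⁻¹` for `1 ≤ i,j ≤ 2`, where
`D_{ij} = (d₁d₂^{r(2i+j)+1})(d₁d₂^{r(2i+j)+2})⋯(d₁d₂^{r(2i+j)+r})`. -/
def cdRels (r : ℕ) : Set (FreeGroup (Fin 4)) :=
  { w | ∃ i j : Fin 2,
      w = (FreeGroup.of (⟨i.val, by omega⟩ : Fin 4))⁻¹ *
          FreeGroup.of (⟨j.val + 2, by omega⟩ : Fin 4) *
          FreeGroup.of (⟨i.val, by omega⟩ : Fin 4) *
          (wordProg (FreeGroup.of (2 : Fin 4)) (FreeGroup.of (3 : Fin 4))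
            (r * (2 * (i.val + 1) + (j.val + 1))) r)⁻¹ }

/-- `G_cd = ⟨c₁,c₂,d₁,d₂ ∣ cᵢ⁻¹d_jcᵢ = D_{ij}, 1 ≤ i,j ≤ 2⟩`. -/
abbrev Gcd (r : ℕ) := PresentedGroup (cdRels r)

open Function

universe u

theorem FreeGroup.injective_lift_of_ping_pong_mul {ι G : Type u} [Nontrivial ι] [Group G]
    (a : ι → G) (X : ι → Set G) (hX : ∀ i, (X i).Nonempty)
    (hXdisj : Pairwise (Disjoint on X))
    (hmaps : ∀ i j, ∀ g ∈ X i, a j * g ∈ X j)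
    (hcover : Pairwise fun i j => ∀ g, a i * g ∈ X i ∨ a j * g ∈ X j) :
    Injective (FreeGroup.lift a) := by
  refine FreeGroup.injective_lift_of_ping_pong a X (fun i => {g | a i * g ∉ X i}) hX hXdisj
    (fun i j hij => Set.disjoint_left.2 fun g hi hj => (hcover hij g).elim hi hj)
    (fun i j => Set.disjoint_left.2 fun g hg hg' => hg' (hmaps i j g hg)) ?_ ?_
  · rintro i _ ⟨g, hg, rfl⟩
    simpa using hg
  · rintro i _ ⟨g, hg, rfl⟩
    simpa using hg

namespace FreeGroup

variable {α : Type*}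

theorem isReduced_of_forall_snd {L : List (α × Bool)} (h : ∀ a ∈ L, a.2 = true) :
    IsReduced L :=
  List.isChain_iff_forall_rel_of_append_cons_cons.2 fun a b l₁ l₂ hL _ => by
    rw [h a (by simp [hL]), h b (by simp [hL])]

variable [DecidableEq α]

theorem toWord_mk_of_isReduced {L : List (α × Bool)} (h : IsReduced L) : (mk L).toWord = L := by
  rw [toWord_mk, h.reduce_eq]

theorem toWord_mul_of_isReduced {x y : FreeGroup α} (h : IsReduced (x.toWord ++ y.toWord)) :
    (x * y).toWord = x.toWord ++ y.toWord := by
  rw [toWord_mul, h.reduce_eq]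

theorem toWord_mul_of_forall_snd {x y : FreeGroup α} (hx : ∀ a ∈ x.toWord, a.2 = true)
    (hy : ∀ b ∈ y.toWord.head?, b.2 = true) : (x * y).toWord = x.toWord ++ y.toWord :=
  toWord_mul_of_isReduced <| List.isChain_append.2 ⟨isReduced_toWord, isReduced_toWord,
    fun a ha b hb _ => by rw [hx a (List.mem_of_mem_getLast? ha), hy b hb]⟩

theorem exists_reduce_append_eq {W L : List (α × Bool)} (hW : IsReduced W) (hL : IsReduced L) :
    ∃ W₁ C L₁, W = W₁ ++ C ∧ L = invRev C ++ L₁ ∧ reduce (W ++ L) = W₁ ++ L₁ := by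
  induction L generalizing W with
  | nil => exact ⟨W, [], [], by simp, by simp [invRev], by simpa using hW.reduce_eq⟩
  | cons y L ih =>
    by_cases hlast : W.getLast? = some (y.1, !y.2)
    · obtain ⟨W₀, rfl⟩ := List.getLast?_eq_some_iff.1 hlast
      obtain ⟨W₁, C, L₁, rfl, rfl, hred⟩ :=
        ih (W := W₀) (hW.infix ⟨[], [(y.1, !y.2)], by simp⟩) (hL.infix ⟨[y], [], by simp⟩)
      refine ⟨W₁, C ++ [(y.1, !y.2)], L₁, by simp, by simp [invRev], ?_⟩
      have hstep : Red.Step (W₁ ++ C ++ (y.1, !y.2) :: (y.1, !!y.2) :: (invRev C ++ L₁))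
          (W₁ ++ C ++ (invRev C ++ L₁)) := Red.Step.not
      simpa [← hred] using reduce.Step.eq hstep
    · refine ⟨W, [], y :: L, by simp, by simp [invRev], IsReduced.reduce_eq ?_⟩
      refine List.isChain_append.2 ⟨hW, hL, fun x hx z hz hxz => ?_⟩
      obtain rfl : y = z := by simpa using hz
      by_contra hne
      rw [Option.mem_def.1 hx] at hlast
      exact hlast (congrArg some (Prod.ext hxz (Bool.eq_not.2 hne)))

theorem exists_toWord_mul (x y : FreeGroup α) :
    ∃ W₁ C L₁,
      x.toWord = W₁ ++ C ∧ y.toWord = invRev C ++ L₁ ∧ (x * y).toWord = W₁ ++ L₁ := by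
  rw [toWord_mul]
  exact exists_reduce_append_eq isReduced_toWord isReduced_toWord

end FreeGroup

section wordProg

variable {G H : Type*} [Group G] [Group H]

theorem wordProg_succ (x y : G) (s r : ℕ) :
    wordProg x y s (r + 1) = x * y ^ (s + 1) * wordProg x y (s + 1) r := by
  simp only [wordProg, List.range_succ_eq_map, List.map_cons, List.map_map, List.prod_cons]
  congr 3
  ext k
  simp only [comp_apply, Nat.succ_eq_add_one]
  ring_nf

theorem wordProg_one (x y : G) (s : ℕ) : wordProg x y s 1 = x * y ^ (s + 1) := by
  simp [wordProg]

theorem map_wordProg (f : G →* H) (x y : G) (s r : ℕ) :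
    f (wordProg x y s r) = wordProg (f x) (f y) s r := by
  simp [wordProg, map_list_prod, comp_def]

end wordProg

namespace FreeGroup

def blockWord (s : ℕ) : List (Fin 2 × Bool) := (0, true) :: List.replicate (s + 1) (1, true)

def progWord : ℕ → ℕ → List (Fin 2 × Bool)
  | _, 0 => []
  | s, r + 1 => blockWord s ++ progWord (s + 1) r

theorem progWord_succ (s r : ℕ) : progWord s (r + 1) = blockWord s ++ progWord (s + 1) r := rfl

theorem progWord_succ' (s r : ℕ) : progWord s (r + 1) = progWord s r ++ blockWord (s + r) := by
  induction r generalizing s with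
  | zero => simp [progWord]
  | succ r ih => rw [progWord_succ, ih, progWord_succ, List.append_assoc, Nat.add_right_comm]; rfl

theorem forall_snd_progWord (s r : ℕ) : ∀ a ∈ progWord s r, a.2 = true := by
  induction r generalizing s with
  | zero => simp [progWord]
  | succ r ih =>
    intro a ha
    rcases List.mem_append.1 ha with ha | ha
    · rcases List.mem_cons.1 ha with rfl | ha
      · rfl
      · rw [List.eq_of_mem_replicate ha]
    · exact ih _ a ha

theorem mk_blockWord (s : ℕ) : mk (blockWord s) = of 0 * of 1 ^ (s + 1) := by
  rw [← mk_toWord (x := of 1 ^ (s + 1)), toWord_of_pow, ← mk_toWord (x := of 0), toWord_of,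
    mul_mk]
  rfl

theorem mk_progWord (s r : ℕ) : mk (progWord s r) = wordProg (of 0) (of 1) s r := by
  induction r generalizing s with
  | zero => rfl
  | succ r ih => rw [progWord_succ, ← mul_mk, ih, mk_blockWord, wordProg_succ]

theorem toWord_wordProg (s r : ℕ) : (wordProg (of 0) (of 1) s r).toWord = progWord s r := by
  rw [← mk_progWord, toWord_mk_of_isReduced (isReduced_of_forall_snd (forall_snd_progWord s r))]

theorem injective_lift_mul_pow (p : ℕ) :
    Injective (lift ![of 0 * of 1 ^ (p + 1), of (0 : Fin 2) * of 1 ^ (p + 2)]) := by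
  -- `(d₁d₂^(p+1))⁻¹ d₁d₂^(p+2) = d₂`, whence `ψ`
  let ψ : FreeGroup (Fin 2) →* FreeGroup (Fin 2) :=
    lift ![of 0 * ((of 0)⁻¹ * of 1) ^ (-(p + 1 : ℤ)), (of 0)⁻¹ * of 1]
  have hψ : ψ.comp (lift ![of 0 * of 1 ^ (p + 1), of 0 * of 1 ^ (p + 2)]) = MonoidHom.id _ := by
    ext j
    fin_cases j <;> simp [ψ] <;> group
  exact HasLeftInverse.injective ⟨ψ, DFunLike.congr_fun hψ⟩

theorem blockWord_append_prefix_progWord (s r : ℕ) :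
    blockWord s ++ [(0, true)] <+: progWord s (r + 2) := by
  rw [progWord_succ, progWord_succ]
  exact (List.prefix_append_right_inj _).2 (List.prefix_append _ _)

theorem blockWord_prefix_progWord (s r : ℕ) : blockWord s <+: progWord s (r + 1) :=
  List.prefix_append _ _

theorem not_prefix_blockWord_append_of_prefix_blockWord {s t : ℕ} (hst : s < t)
    {L : List (Fin 2 × Bool)} (ht : blockWord t <+: L) : ¬ blockWord s ++ [(0, true)] <+: L := by
  intro hs
  have h := List.prefix_of_prefix_length_le hs ht (by simp [blockWord]; omega)
  have hmem : ((0 : Fin 2), true) ∈ List.replicate (t + 1) ((1 : Fin 2), true) :=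
    ((List.prefix_cons_inj _).1 h).subset (by simp)
  simp at hmem

theorem toWord_wordProg_succ_mul {s r m k : ℕ} (hm : s + r = m + k) {g : FreeGroup (Fin 2)}
    {T : List (Fin 2 × Bool)} (hg : g.toWord = List.replicate m (1, false) ++ (0, false) :: T) :
    (wordProg (of 0) (of 1) s (r + 1) * g).toWord =
      progWord s r ++ blockWord k ++ (0, false) :: T := by
  have hpow : mk (List.replicate m ((1 : Fin 2), true)) = of 1 ^ m := by
    rw [← toWord_of_pow, mk_toWord]
  have hg' : g = (of 1 ^ m)⁻¹ * mk ((0, false) :: T) := by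
    rw [← mk_toWord (x := g), hg, ← mul_mk, ← hpow, inv_mk]
    simp [invRev]
  have hv : wordProg (of 0) (of 1) s (r + 1) = mk (progWord s r ++ blockWord k) * of 1 ^ m := by
    rw [← mk_progWord, progWord_succ', ← mul_mk, ← mul_mk, mk_blockWord, mk_blockWord, hm,
      mul_assoc, mul_assoc, ← pow_add]
    ring_nf
  rw [hv, hg', mul_assoc, mul_inv_cancel_left, mul_mk]
  -- the last block keeps `k + 1 ≥ 1` letters `d₂`, so the `d₁⁻¹` of `g` does not cancel
  refine toWord_mk_of_isReduced (List.isChain_append.2 ⟨isReduced_of_forall_snd ?_,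
    isReduced_toWord.infix (hg ▸ List.suffix_append _ _).isInfix, ?_⟩)
  · simpa [blockWord, or_imp, forall_and] using forall_snd_progWord s r
  · simp [blockWord, List.replicate_succ', List.getLast?_cons]

/-- Write `u, v` for the two progression words. If at most `p + 2` letters of `u` survive in
`u g`, then `g` begins with the inverse of the last block `d₁ d₂^(p+r+2)` of `u`, which `v`
absorbs without touching its first block; otherwise `u g` keeps the prefix `d₁ d₂^(p+1) d₁`. -/
theorem prefix_or_prefix_toWord_mul (p r : ℕ) (g : FreeGroup (Fin 2)) :
    blockWord p ++ [(0, true)] <+: (wordProg (of 0) (of 1) p (r + 2) * g).toWord ∨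
      blockWord (p + r + 2) <+: (wordProg (of 0) (of 1) (p + r + 2) (r + 2) * g).toWord := by
  obtain ⟨W₁, C, L₁, hu, hg, hug⟩ := exists_toWord_mul (wordProg (of 0) (of 1) p (r + 2)) g
  rw [toWord_wordProg] at hu
  by_cases hlen : p + 3 ≤ W₁.length
  · left
    rw [hug]
    exact (List.prefix_of_prefix_length_le (blockWord_append_prefix_progWord p r)
      (hu ▸ List.prefix_append W₁ C) (by simp [blockWord]; omega)).trans
      (List.prefix_append _ _)
  · right
    have hu' :
        progWord p (r + 2) = blockWord p ++ progWord (p + 1) r ++ blockWord (p + r + 1) := by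
      rw [progWord_succ, progWord_succ', List.append_assoc, Nat.add_right_comm]
    have hlast : blockWord (p + r + 1) <:+ C := by
      refine List.suffix_of_suffix_length_le (hu' ▸ List.suffix_append _ _)
        (hu ▸ List.suffix_append _ _) ?_
      have hlen' := congrArg List.length (hu.symm.trans hu')
      simp only [List.length_append, blockWord, List.length_cons, List.length_replicate]
        at hlen' ⊢
      omega
    obtain ⟨C₀, rfl⟩ := hlast
    have hg' :
        g.toWord = List.replicate (p + r + 2) (1, false) ++ (0, false) :: (invRev C₀ ++ L₁) := by
      simp [hg, blockWord, invRev]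
    rw [toWord_wordProg_succ_mul (r := r + 1) (k := r + 1) (by omega) hg', List.append_assoc]
    exact (blockWord_prefix_progWord _ r).trans (List.prefix_append _ _)

theorem injective_lift_wordProg_add_two (p r : ℕ) :
    Injective (lift ![wordProg (of 0) (of 1) p (r + 2),
      wordProg (of (0 : Fin 2)) (of 1) (p + r + 2) (r + 2)]) := by
  set a :=
    ![wordProg (of 0) (of 1) p (r + 2), wordProg (of (0 : Fin 2)) (of 1) (p + r + 2) (r + 2)]
  set W : Fin 2 → List (Fin 2 × Bool) := ![blockWord p ++ [(0, true)], blockWord (p + r + 2)]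
  have hW : ∀ i, W i <+: (a i).toWord := Fin.forall_fin_two.2
    ⟨by simpa [a, W, toWord_wordProg] using blockWord_append_prefix_progWord p r,
      by simpa [a, W, toWord_wordProg] using blockWord_prefix_progWord (p + r + 2) (r + 1)⟩
  have hhead :
      ∀ i (g : FreeGroup (Fin 2)), W i <+: g.toWord → g.toWord.head? = some (0, true) := by
    rintro i g ⟨t, ht⟩
    rw [← ht]
    fin_cases i <;> rfl
  have hpos : ∀ i, ∀ x ∈ (a i).toWord, x.2 = true := Fin.forall_fin_two.2
    ⟨by simpa [a, toWord_wordProg] using forall_snd_progWord _ _,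
      by simpa [a, toWord_wordProg] using forall_snd_progWord _ _⟩
  refine injective_lift_of_ping_pong_mul a (fun i => {g | W i <+: g.toWord})
    (fun i => ⟨a i, hW i⟩) ?_ ?_ ?_
  · intro i j hij
    fin_cases i <;> fin_cases j <;> simp only [ne_eq, not_true_eq_false] at hij
    · exact Set.disjoint_left.2 fun g h₀ h₁ =>
        not_prefix_blockWord_append_of_prefix_blockWord (by omega) h₁ h₀
    · exact Set.disjoint_left.2 fun g h₁ h₀ =>
        not_prefix_blockWord_append_of_prefix_blockWord (by omega) h₁ h₀
  · intro i j g hg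
    change W j <+: (a j * g).toWord
    rw [toWord_mul_of_forall_snd (hpos j) (by simp [hhead i g hg])]
    exact (hW j).trans (List.prefix_append _ _)
  · intro i j hij
    fin_cases i <;> fin_cases j <;> simp only [ne_eq, not_true_eq_false] at hij
    · exact prefix_or_prefix_toWord_mul p r
    · exact fun g => (prefix_or_prefix_toWord_mul p r g).symm

theorem injective_lift_wordProg (p : ℕ) {r : ℕ} (hr : 1 ≤ r) :
    Injective (lift fun j : Fin 2 => wordProg (of (0 : Fin 2)) (of 1) (p + r * j) r) := by
  obtain rfl | ⟨r, rfl⟩ : r = 1 ∨ ∃ r', r = r' + 2 := by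
    rcases r with _ | _ | r <;> simp_all
  · have h : (fun j : Fin 2 => wordProg (of (0 : Fin 2)) (of 1) (p + 1 * j) 1) =
        ![of 0 * of 1 ^ (p + 1), of (0 : Fin 2) * of 1 ^ (p + 2)] := by
      funext j
      fin_cases j <;> simp [wordProg_one]
    exact h ▸ injective_lift_mul_pow p
  · have h : (fun j : Fin 2 => wordProg (of (0 : Fin 2)) (of 1) (p + (r + 2) * j) (r + 2)) =
        ![wordProg (of (0 : Fin 2)) (of 1) p (r + 2),
          wordProg (of (0 : Fin 2)) (of 1) (p + r + 2) (r + 2)] := by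
      funext j
      fin_cases j <;> simp [add_assoc]
    exact h ▸ injective_lift_wordProg_add_two p r

end FreeGroup

theorem exists_overgroup_conj_eq_of_embedding {H K : Type u} [Group H] [Group K] {ι : H →* K}
    (hι : Injective ι) {φ : H →* H} (hφ : Injective φ) :
    ∃ (L : Type u) (_ : Group L) (κ : K →* L) (t : L),
      Injective κ ∧ ∀ x, t * κ (ι x) * t⁻¹ = κ (ι (φ x)) := by
  let e : ι.range ≃* (ι.comp φ).range :=
    (MonoidHom.ofInjective hι).symm.trans (MonoidHom.ofInjective (hι.comp hφ))
  refine ⟨HNNExtension K ι.range (ι.comp φ).range e, inferInstance, HNNExtension.of,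
    HNNExtension.t, HNNExtension.of_injective e, fun x => ?_⟩
  have hx : (MonoidHom.ofInjective hι).symm ⟨ι x, x, rfl⟩ = x :=
    (MulEquiv.symm_apply_eq _).2 (Subtype.ext (MonoidHom.ofInjective_apply hι).symm)
  rw [← HNNExtension.equiv_eq_conj (φ := e) ⟨ι x, x, rfl⟩]
  simp only [e, MulEquiv.trans_apply, hx, MonoidHom.ofInjective_apply, MonoidHom.comp_apply]

theorem exists_overgroup_conj_eq {n : ℕ} {H : Type u} [Group H] (φ : Fin n → H →* H)
    (hφ : ∀ i, Injective (φ i)) :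
    ∃ (K : Type u) (_ : Group K) (ι : H →* K) (t : Fin n → K),
      Injective ι ∧ ∀ i x, t i * ι x * (t i)⁻¹ = ι (φ i x) := by
  induction n with
  | zero => exact ⟨H, inferInstance, MonoidHom.id H, Fin.elim0, injective_id, fun i => i.elim0⟩
  | succ n ih =>
    obtain ⟨K, _, ι, t, hι, ht⟩ := ih (fun i => φ i.castSucc) (fun i => hφ _)
    obtain ⟨L, _, κ, s, hκ, hs⟩ :=
      exists_overgroup_conj_eq_of_embedding hι (hφ (Fin.last n))
    refine ⟨L, inferInstance, κ.comp ι, Fin.lastCases s fun i => κ (t i), hκ.comp hι,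
      Fin.lastCases ?_ fun i x => ?_⟩
    · simpa using hs
    · simp [← ht i x]

section GcdLift

variable {G : Type*} [Group G] (r : ℕ) (c d : Fin 2 → G)
  (h : ∀ i j : Fin 2,
    (c i)⁻¹ * d j * c i = wordProg (d 0) (d 1) (r * (2 * (i.val + 1) + (j.val + 1))) r)

def Gcd.lift : Gcd r →* G :=
  PresentedGroup.toGroup (f := ![c 0, c 1, d 0, d 1]) <| by
    rintro _ ⟨i, j, rfl⟩
    simp only [map_mul, map_inv, FreeGroup.lift_apply_of, map_wordProg]
    fin_cases i <;> fin_cases j <;> exact mul_inv_eq_one.2 (h _ _)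

theorem Gcd.lift_of_add_two (j : Fin 2) :
    Gcd.lift r c d h (PresentedGroup.of ⟨j.val + 2, by omega⟩) = d j := by
  rw [Gcd.lift, PresentedGroup.toGroup.of]
  fin_cases j <;> rfl

end GcdLift

def Gcd.endoD (r : ℕ) (i : Fin 2) : FreeGroup (Fin 2) →* FreeGroup (Fin 2) :=
  FreeGroup.lift fun j =>
    wordProg (.of 0) (.of 1) (r * (2 * (i.val + 1) + (j.val + 1))) r

theorem Gcd.injective_endoD {r : ℕ} (hr : 1 ≤ r) (i : Fin 2) : Injective (Gcd.endoD r i) := by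
  have h : (fun j : Fin 2 =>
      wordProg (FreeGroup.of (0 : Fin 2)) (.of 1) (r * (2 * (i.val + 1) + (j.val + 1))) r) =
      fun j : Fin 2 => wordProg (.of 0) (.of 1) (r * (2 * i + 3) + r * j) r := by
    funext j
    ring_nf
  rw [Gcd.endoD, h]
  exact FreeGroup.injective_lift_wordProg _ hr

/-- For every `r ≥ 1`, the homomorphism `F(d₁,d₂) → G_cd` sending `d₁, d₂` to the
generators `d₁, d₂` of `G_cd` is injective: `F(d₁,d₂)` is a subgroup of `G_cd`. -/
theorem freeGroup_d_embeds_in_Gcd (r : ℕ) (hr : 1 ≤ r) :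
    Function.Injective (FreeGroup.lift (fun j : Fin 2 =>
      (PresentedGroup.of (⟨j.val + 2, by omega⟩ : Fin 4) : Gcd r))) := by
  obtain ⟨K, _, ι, t, hι, ht⟩ :=
    exists_overgroup_conj_eq (Gcd.endoD r) (Gcd.injective_endoD hr)
  let θ : Gcd r →* K := Gcd.lift r (fun i => (t i)⁻¹) (fun j => ι (.of j)) fun i j => by
    rw [inv_inv, ht, Gcd.endoD, FreeGroup.lift_apply_of, map_wordProg]
  have hθ : θ.comp (FreeGroup.lift fun j : Fin 2 =>
      (PresentedGroup.of (⟨j.val + 2, by omega⟩ : Fin 4) : Gcd r)) = ι :=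
    FreeGroup.ext_hom _ _ fun j => by
      rw [MonoidHom.comp_apply, FreeGroup.lift_apply_of]
      exact Gcd.lift_of_add_two r _ _ _ j
  exact Injective.of_comp (f := θ) (by rw [← MonoidHom.coe_comp, hθ]; exact hι)
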